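/- The line graph of K₄ admits a kernel-perfect orientation with maximum out-degree at most 3, and moreover, for any fixed vertex v of K₄, an orientation in which additionally every edge incident to v has out-degree at most 2. Hence K₄ is strongly 4-edge-orientable. -/
import Mathlib


open SimpleGraph

/-- Adjacency in the line graph `L(G)`: two distinct edges sharing an endpoint. -/
def lineAdj {V : Type*} (G : SimpleGraph V) (e f : G.edgeSet) : Prop :=
  e ≠ f ∧ ∃ x : V, x ∈ (e : Sym2 V) ∧ x ∈ (f : Sym2 V)

/-- `D` is an orientation of the (loopless) adjacency relation `Adj`:
every arc of `D` is an edge, and every edge gets at least one of its two arcs. -/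
def IsOrientation {α : Type*} (Adj : α → α → Prop) (D : α → α → Prop) : Prop :=
  (∀ a b, D a b → Adj a b) ∧ (∀ a b, Adj a b → D a b ∨ D b a)

/-- A digraph (relation) is kernel-perfect if every induced subdigraph has a kernel:
an independent set `S` such that every vertex outside `S` has an out-neighbor in `S`. -/
def KernelPerfect {α : Type*} (D : α → α → Prop) : Prop :=
  ∀ Z : Set α, ∃ S ⊆ Z, (∀ a ∈ S, ∀ b ∈ S, ¬ D a b) ∧
    ∀ z ∈ Z, z ∉ S → ∃ s ∈ S, D z s

/-- Out-degree of a vertex in a digraph given as a relation. -/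
noncomputable def outDeg {α : Type*} (D : α → α → Prop) (a : α) : ℕ := {b | D a b}.ncard

/-- Degree of a vertex. -/
noncomputable def deg {V : Type*} (G : SimpleGraph V) (v : V) : ℕ := (G.neighborSet v).ncard

/-- Maximum degree. -/
noncomputable def maxDeg {V : Type*} (G : SimpleGraph V) : ℕ := sSup (Set.range (deg G))

/-- `G` is `f`-edge-orientable: `L(G)` admits a kernel-perfect orientation with
`1 + d⁺(e) ≤ f e` for every edge `e`. -/
def EdgeOrientable {V : Type*} (G : SimpleGraph V) (f : G.edgeSet → ℕ) : Prop :=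
  ∃ D : G.edgeSet → G.edgeSet → Prop,
    IsOrientation (lineAdj G) D ∧ KernelPerfect D ∧ ∀ e, outDeg D e + 1 ≤ f e

open Classical in
/-- The function `f_{k,v}`: `deg v` on edges incident to `v`, and `k` elsewhere. -/
noncomputable def fkv {V : Type*} (G : SimpleGraph V) (k : ℕ) (v : V) (e : G.edgeSet) : ℕ :=
  if v ∈ (e : Sym2 V) then deg G v else k

/-- `G` is strongly `k`-edge-orientable. -/
def StronglyEdgeOrientable {V : Type*} (G : SimpleGraph V) (k : ℕ) : Prop :=
  ∀ v : V, EdgeOrientable G (fkv G k v)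

/-- `G` is `f`-edge-choosable. -/
def FEdgeChoosable {V : Type*} (G : SimpleGraph V) (f : G.edgeSet → ℕ) : Prop :=
  ∀ ℓ : G.edgeSet → Finset ℕ, (∀ e, f e ≤ (ℓ e).card) →
    ∃ φ : G.edgeSet → ℕ, (∀ e, φ e ∈ ℓ e) ∧
      ∀ e₁ e₂, lineAdj G e₁ e₂ → φ e₁ ≠ φ e₂

/-- `G ∈ G*`: any two distinct odd cycles share at most one edge. -/
def InGStar {V : Type*} (G : SimpleGraph V) : Prop :=
  ∀ (u w : V) (c₁ : G.Walk u u) (c₂ : G.Walk w w),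
    c₁.IsCycle → c₂.IsCycle → Odd c₁.length → Odd c₂.length →
    {e | e ∈ c₁.edges} ≠ {e | e ∈ c₂.edges} →
    ({e | e ∈ c₁.edges} ∩ {e | e ∈ c₂.edges}).ncard ≤ 1

/-- `G` is 2-connected: connected, and still connected after deleting any one vertex. -/
def TwoConn {V : Type*} (G : SimpleGraph V) : Prop :=
  G.Connected ∧ ∀ v : V, (G.induce {w | w ≠ v}).Connected

/-- A block of `G`: a maximal 2-connected subgraph. -/
def IsBlock {V : Type*} (G : SimpleGraph V) (B : G.Subgraph) : Prop :=
  TwoConn B.coe ∧ ∀ B' : G.Subgraph, TwoConn B'.coe → B ≤ B' → B = B'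

/-- Vertex type of the theta graph with path lengths `l`: two hubs
(`Sum.inl false`, `Sum.inl true`) plus the internal vertices of each path. -/
def ThetaVert (l : List ℕ) : Type := Bool ⊕ (Σ i : Fin l.length, Fin (l.get i - 1))

/-- The theta graph `Θ_{l₁,…,l_k}`: two hubs joined by internally disjoint paths,
the `i`-th of length `l i`. -/
def thetaGraph (l : List ℕ) : SimpleGraph (ThetaVert l) :=
  SimpleGraph.fromRel (fun a b =>
    match a, b with
    | Sum.inl false, Sum.inl true => 1 ∈ l
    | Sum.inl false, Sum.inr ⟨_, j⟩ => j.val = 0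
    | Sum.inl true, Sum.inr ⟨i, j⟩ => j.val = l.get i - 2
    | Sum.inr ⟨i, j⟩, Sum.inr ⟨i', j'⟩ => i.val = i'.val ∧ j'.val = j.val + 1
    | _, _ => False)

/-- `v` (outside `c`) touches `w ∈ c`: some `v,w`-path meets `c` only at `w`. -/
def Touches {V : Type*} (G : SimpleGraph V) {u : V} (c : G.Walk u u) (v w : V) : Prop :=
  w ∈ c.support ∧ ∃ p : G.Walk v w, p.IsPath ∧ ∀ x ∈ p.support, x ∈ c.support → x = w

namespace Stmt13Aux

abbrev K4 := completeGraph (Fin 4)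

instance : DecidableRel K4.Adj := fun a b => inferInstanceAs (Decidable (a ≠ b))

abbrev E4 := K4.edgeSet

/-- Explicit arc lists (one per choice of `v`) for a kernel-perfect orientation of `L(K₄)`. -/
def arcsF : Fin 4 → List (Sym2 (Fin 4) × Sym2 (Fin 4))
  | 0 => [(s(0,1), s(0,2)),
      (s(0,1), s(0,3)),
      (s(0,2), s(0,3)),
      (s(0,2), s(2,3)),
      (s(1,2), s(0,1)),
      (s(1,2), s(0,2)),
      (s(1,2), s(2,3)),
      (s(1,3), s(0,1)),
      (s(1,3), s(0,3)),
      (s(1,3), s(1,2)),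
      (s(2,3), s(0,3)),
      (s(2,3), s(1,2)),
      (s(2,3), s(1,3))]
  | 1 => [(s(0,1), s(1,2)),
      (s(0,1), s(1,3)),
      (s(1,2), s(1,3)),
      (s(1,2), s(2,3)),
      (s(0,2), s(0,1)),
      (s(0,2), s(1,2)),
      (s(0,2), s(2,3)),
      (s(0,3), s(0,1)),
      (s(0,3), s(1,3)),
      (s(0,3), s(0,2)),
      (s(2,3), s(1,3)),
      (s(2,3), s(0,2)),
      (s(2,3), s(0,3))]
  | 2 => [(s(1,2), s(0,2)),
      (s(1,2), s(2,3)),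
      (s(0,2), s(2,3)),
      (s(0,2), s(0,3)),
      (s(0,1), s(1,2)),
      (s(0,1), s(0,2)),
      (s(0,1), s(0,3)),
      (s(1,3), s(1,2)),
      (s(1,3), s(2,3)),
      (s(1,3), s(0,1)),
      (s(0,3), s(2,3)),
      (s(0,3), s(0,1)),
      (s(0,3), s(1,3))]
  | 3 => [(s(1,3), s(2,3)),
      (s(1,3), s(0,3)),
      (s(2,3), s(0,3)),
      (s(2,3), s(0,2)),
      (s(1,2), s(1,3)),
      (s(1,2), s(2,3)),
      (s(1,2), s(0,2)),
      (s(0,1), s(1,3)),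
      (s(0,1), s(0,3)),
      (s(0,1), s(1,2)),
      (s(0,2), s(0,3)),
      (s(0,2), s(1,2)),
      (s(0,2), s(0,1))]


def Dv (v : Fin 4) (e f : E4) : Prop := ((e : Sym2 (Fin 4)), (f : Sym2 (Fin 4))) ∈ arcsF v

instance (v : Fin 4) : DecidableRel (Dv v) := fun _ _ => inferInstanceAs (Decidable (_ ∈ _))

instance : DecidableRel (lineAdj K4) :=
  fun _ _ => inferInstanceAs (Decidable (_ ∧ ∃ x : Fin 4, _ ∧ _))

instance (v : Fin 4) (Z S : Finset E4) :
    Decidable ((∀ a ∈ S, ∀ b ∈ S, ¬ Dv v a b) ∧ ∀ z ∈ Z, z ∉ S → ∃ s ∈ S, Dv v z s) :=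
  instDecidableAnd

lemma dv_orient (v : Fin 4) : IsOrientation (lineAdj K4) (Dv v) := by
  constructor
  · revert v; decide
  · revert v; decide

set_option maxHeartbeats 4000000 in
set_option maxRecDepth 100000 in
lemma dv_kp_finset : ∀ (v : Fin 4) (Z : Finset E4), ∃ S : Finset E4, S ⊆ Z ∧
    (∀ a ∈ S, ∀ b ∈ S, ¬ Dv v a b) ∧ ∀ z ∈ Z, z ∉ S → ∃ s ∈ S, Dv v z s := by
  decide

lemma dv_kp (v : Fin 4) : KernelPerfect (Dv v) := by
  intro Z
  classical
  obtain ⟨S, hSZ, hind, habs⟩ := dv_kp_finset v (Set.toFinite Z).toFinset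
  refine ⟨(S : Set E4), ?_, ?_, ?_⟩
  · intro x hx
    exact (Set.Finite.mem_toFinset _).1 (hSZ hx)
  · intro a ha b hb
    exact hind a ha b hb
  · intro z hz hzS
    obtain ⟨s, hs, hDs⟩ := habs z ((Set.Finite.mem_toFinset _).2 hz) hzS
    exact ⟨s, hs, hDs⟩

lemma outDeg_eq (v : Fin 4) (e : E4) :
    outDeg (Dv v) e = (Finset.univ.filter (Dv v e)).card := by
  rw [outDeg, Set.ncard_eq_toFinset_card', Set.toFinset_setOf]

lemma dv_out3 (v : Fin 4) (e : E4) : outDeg (Dv v) e ≤ 3 := by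
  rw [outDeg_eq]
  revert v e; decide

lemma dv_out2 (v : Fin 4) (e : E4) (h : v ∈ (e : Sym2 (Fin 4))) : outDeg (Dv v) e ≤ 2 := by
  rw [outDeg_eq]
  revert h; revert v e; decide

lemma deg_K4 (v : Fin 4) : deg K4 v = 3 := by
  rw [deg, Set.ncard_eq_toFinset_card']
  revert v; decide

lemma key (v : Fin 4) : ∃ D : E4 → E4 → Prop,
    IsOrientation (lineAdj K4) D ∧ KernelPerfect D ∧
    (∀ e, outDeg D e ≤ 3) ∧
    (∀ e : E4, v ∈ (e : Sym2 (Fin 4)) → outDeg D e ≤ 2) :=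
  ⟨Dv v, dv_orient v, dv_kp v, dv_out3 v, dv_out2 v⟩

end Stmt13Aux


/-- `L(K₄)` has a kernel-perfect orientation with all out-degrees
at most 3, and for any fixed vertex `v`, with out-degree at most 2 on edges
incident to `v`; hence `K₄` is strongly 4-edge-orientable. -/
theorem stmt13 :
    (∀ v : Fin 4, ∃ D : (completeGraph (Fin 4)).edgeSet →
        (completeGraph (Fin 4)).edgeSet → Prop,
      IsOrientation (lineAdj (completeGraph (Fin 4))) D ∧ KernelPerfect D ∧
      (∀ e, outDeg D e ≤ 3) ∧
      (∀ e : (completeGraph (Fin 4)).edgeSet, v ∈ (e : Sym2 (Fin 4)) →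
        outDeg D e ≤ 2)) ∧
    StronglyEdgeOrientable (completeGraph (Fin 4)) 4 := by
  constructor
  · intro v
    exact Stmt13Aux.key v
  · intro v
    obtain ⟨D, hO, hK, h3, h2⟩ := Stmt13Aux.key v
    refine ⟨D, hO, hK, ?_⟩
    intro e
    by_cases h : v ∈ (e : Sym2 (Fin 4))
    · simp only [fkv]
      rw [if_pos h, Stmt13Aux.deg_K4]
      have := h2 e h
      omega
    · simp only [fkv]
      rw [if_neg h]
      have := h3 e
      omega
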